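/- arXiv:2510.15919 — 6 statements merged into one kernel-verified Lean document; each statement's English description precedes it below -/
import Mathlib

section
/- Let A be an m×m complex matrix with eigenvalues λ₁,…,λ_m (with multiplicity). Define spread(A) = max_{i,j} |λ_i − λ_j|. If A is real symmetric and m ≥ 3, then spread(A) ≤ sqrt(2‖A‖_F² − (2/m)|Tr(A)|²), where ‖A‖_F is the Frobenius norm. -/
/-!
Both `‖A‖_F²` and `Tr A` are spectral invariants (`Tr (A Aᵀ) = Σ λₖ²`, `Tr A = Σ λₖ`), so the
bound is an inequality about `m` real numbers: `(λᵢ - λⱼ)² ≤ 2 Σ λₖ² - (2/m) (Σ λₖ)²`. Splitting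
off `λᵢ, λⱼ`, it follows from Cauchy–Schwarz on the remaining `m - 2` values.
-/

open Finset

namespace Matrix

lemma trace_mul_transpose_self {n R : Type*} [Fintype n] [CommSemiring R] (A : Matrix n n R) :
    (A * Aᵀ).trace = ∑ i, ∑ j, A i j ^ 2 := by
  simp [trace, mul_apply, sq]

namespace IsHermitian

variable {n 𝕜 : Type*} [Fintype n] [DecidableEq n] [RCLike 𝕜] {A : Matrix n n 𝕜}

lemma trace_cfc (hA : A.IsHermitian) (f : ℝ → ℝ) :
    (cfc f A).trace = ∑ i, (f (hA.eigenvalues i) : 𝕜) := by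
  rw [hA.cfc_eq, IsHermitian.cfc, Unitary.conjStarAlgAut_apply, trace_mul_cycle,
    Unitary.coe_star_mul_self, one_mul, trace_diagonal]
  rfl

lemma trace_pow (hA : A.IsHermitian) (k : ℕ) :
    (A ^ k).trace = ∑ i, (hA.eigenvalues i ^ k : 𝕜) := by
  rw [← cfc_pow_id (R := ℝ) A k hA.isSelfAdjoint, hA.trace_cfc]
  push_cast
  rfl

end IsHermitian

end Matrix

section Spread

variable {ι : Type*} [Fintype ι]

lemma two_div_card_mul_sq_sum_le (f : ι → ℝ) :
    (2 / Fintype.card ι) * (∑ k, f k) ^ 2 ≤ 2 * ∑ k, f k ^ 2 := by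
  rcases (Fintype.card ι).eq_zero_or_pos with hcard | hcard
  · simp [hcard, sum_nonneg (fun k _ => sq_nonneg (f k))]
  have hCS : (∑ k, f k) ^ 2 ≤ Fintype.card ι * ∑ k, f k ^ 2 := sq_sum_le_card_mul_sum_sq
  rw [div_mul_eq_mul_div, div_le_iff₀ (by exact_mod_cast hcard)]
  linarith

lemma sq_sub_le_two_mul_sum_sq_sub_of_ne [DecidableEq ι] (f : ι → ℝ) {i j : ι} (hij : i ≠ j) :
    (f i - f j) ^ 2 ≤ 2 * ∑ k, f k ^ 2 - (2 / Fintype.card ι) * (∑ k, f k) ^ 2 := by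
  set s : Finset ι := univ \ {i, j}
  have hsub : ({i, j} : Finset ι) ⊆ univ := subset_univ _
  have hcard : (Fintype.card ι : ℝ) = #s + 2 := by
    rw [card_sdiff_of_subset hsub, card_pair hij, card_univ,
      Nat.cast_sub (by simpa [card_pair hij] using card_le_univ ({i, j} : Finset ι))]
    ring
  have hsum (g : ι → ℝ) : ∑ k, g k = ∑ k ∈ s, g k + (g i + g j) := by
    rw [← sum_sdiff hsub, sum_pair hij]
  set u := f i + f j
  have hCS : (∑ k ∈ s, f k) ^ 2 ≤ #s * ∑ k ∈ s, f k ^ 2 := sq_sum_le_card_mul_sum_sq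
  have hdev : ∑ k ∈ s, (2 * f k - u) ^ 2
      = 4 * ∑ k ∈ s, f k ^ 2 - 4 * u * ∑ k ∈ s, f k + #s * u ^ 2 := by
    simp only [sub_sq, sum_add_distrib, sum_sub_distrib, mul_pow, ← mul_sum, ← sum_mul, sum_const,
      nsmul_eq_mul]
    ring
  have hdev_nonneg : 0 ≤ ∑ k ∈ s, (2 * f k - u) ^ 2 := sum_nonneg fun k _ => sq_nonneg _
  -- `(#s + 2) (2 q + u²) - 2 (t + u)² = 2 (#s q - t²) + Σ_{k ∈ s} (2 f k - u)²`,
  -- where `t`, `q` are the sums of `f k`, `f k ^ 2` over `s`.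
  rw [hsum f, hsum (f · ^ 2), hcard, div_mul_eq_mul_div, le_sub_iff_add_le,
    ← le_sub_iff_add_le', div_le_iff₀ (by positivity)]
  linarith

lemma sq_sub_le_two_mul_sum_sq_sub (f : ι → ℝ) (i j : ι) :
    (f i - f j) ^ 2 ≤ 2 * ∑ k, f k ^ 2 - (2 / Fintype.card ι) * (∑ k, f k) ^ 2 := by
  classical
  rcases eq_or_ne i j with rfl | hij
  · simpa using two_div_card_mul_sq_sum_le f
  · exact sq_sub_le_two_mul_sum_sq_sub_of_ne f hij

end Spread

open Finset in
theorem mirsky_bound_general (m : ℕ) (A : Matrix (Fin m) (Fin m) ℝ)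
    (hA : A.IsHermitian) :
    (⨆ p : Fin m × Fin m, |hA.eigenvalues p.1 - hA.eigenvalues p.2|) ≤
      Real.sqrt (2 * ∑ i, ∑ j, (A i j) ^ 2 - (2 / m) * |Matrix.trace A| ^ 2) := by
  have hfrob : ∑ i, ∑ j, A i j ^ 2 = ∑ k, hA.eigenvalues k ^ 2 := by
    rw [← A.trace_mul_transpose_self, (Matrix.isHermitian_iff_isSymm.mp hA).eq, ← sq, hA.trace_pow]
    rfl
  have htrace : A.trace = ∑ k, hA.eigenvalues k := by simpa using hA.trace_pow 1
  rw [hfrob, htrace, sq_abs]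
  refine Real.iSup_le (fun p => Real.abs_le_sqrt ?_) (Real.sqrt_nonneg _)
  simpa using sq_sub_le_two_mul_sum_sq_sub hA.eigenvalues p.1 p.2

open Finset in
/-- Mirsky's bound (1956): for a real symmetric `m × m` matrix `A` with `m ≥ 3`,
`spread A = max_{i,j} |λ_i - λ_j| ≤ sqrt (2 ‖A‖_F² - (2/m) |Tr A|²)`. -/
theorem mirsky_bound (m : ℕ) (hm : 3 ≤ m) (A : Matrix (Fin m) (Fin m) ℝ)
    (hA : A.IsHermitian) :
    (⨆ p : Fin m × Fin m, |hA.eigenvalues p.1 - hA.eigenvalues p.2|) ≤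
      Real.sqrt (2 * ∑ i, ∑ j, (A i j) ^ 2 - (2 / m) * |Matrix.trace A| ^ 2) :=
  mirsky_bound_general m A hA
end

section
/- Let A be an m×m real symmetric matrix whose characteristic polynomial p is not λ^m, and let R(T) = resultant_λ(p(λ), p(T+λ)). Then spread(A) is the largest real root of R(T). -/
open Polynomial

/-- The Sylvester matrix of two polynomials `p` and `q` (with respect to their
natural degrees). -/
noncomputable def sylvester {R : Type*} [CommRing R] (p q : R[X]) :
    Matrix (Fin (p.natDegree + q.natDegree)) (Fin (p.natDegree + q.natDegree)) R :=
  Matrix.of fun i j =>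
    if (i : ℕ) < q.natDegree then
      (if (i : ℕ) ≤ (j : ℕ) ∧ (j : ℕ) ≤ (i : ℕ) + p.natDegree then
        p.coeff (p.natDegree - ((j : ℕ) - (i : ℕ))) else 0)
    else
      (if (i : ℕ) - q.natDegree ≤ (j : ℕ) ∧
          (j : ℕ) ≤ (i : ℕ) - q.natDegree + q.natDegree then
        q.coeff (q.natDegree - ((j : ℕ) - ((i : ℕ) - q.natDegree))) else 0)

/-- The resultant of two polynomials, as the determinant of their Sylvester matrix. -/
noncomputable def resultant {R : Type*} [CommRing R] (p q : R[X]) : R :=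
  (_root_.sylvester p q).det

/-! Evaluating `R` at `t` gives `Res(p, p(· + t))`. As `p = ∏ᵢ (X - μᵢ)` splits over the
eigenvalues `μᵢ`, this is `∏ᵢ p(μᵢ + t) = ∏ᵢ ∏ⱼ (μᵢ + t - μⱼ)`, so the real roots of `R` are exactly
the differences `μⱼ - μᵢ` of eigenvalues, and the largest of them is `max μ - min μ`. -/

theorem sylvester_eq_submatrix_transpose {R : Type*} [CommRing R] (p q : R[X]) :
    _root_.sylvester p q =
      (Polynomial.sylvester p q p.natDegree q.natDegree).transpose.submatrix Fin.rev Fin.rev := by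
  ext ⟨i, hi⟩ ⟨j, hj⟩
  simp only [_root_.sylvester, Polynomial.sylvester, Matrix.of_apply, Matrix.submatrix_apply,
    Matrix.transpose_apply]
  rcases lt_or_ge i q.natDegree with hin | hni
  · have hrev : Fin.rev ⟨i, hi⟩ = Fin.natAdd p.natDegree ⟨q.natDegree - 1 - i, by omega⟩ :=
      Fin.ext (by simp; omega)
    simp only [hrev, Fin.addCases_right, Fin.val_rev, Set.mem_Icc, if_pos hin]
    split_ifs <;> first | rfl | (congr 1; omega)
  · have hrev : Fin.rev ⟨i, hi⟩ =
        Fin.castAdd q.natDegree ⟨p.natDegree + q.natDegree - 1 - i, by omega⟩ :=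
      Fin.ext (by simp; omega)
    simp only [hrev, Fin.addCases_left, Fin.val_rev, Set.mem_Icc, if_neg (not_lt.2 hni)]
    split_ifs <;> first | rfl | (congr 1; omega)

theorem resultant_eq_polynomial_resultant {R : Type*} [CommRing R] (p q : R[X]) :
    _root_.resultant p q = Polynomial.resultant p q := by
  rw [_root_.resultant, sylvester_eq_submatrix_transpose]
  exact (Matrix.det_submatrix_equiv_self Fin.revPerm _).trans (Matrix.det_transpose _)

theorem eval_resultant_map_C_comp_X_add_C {R : Type*} [CommRing R] [IsDomain R] (p : R[X])
    (t : R) :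
    (Polynomial.resultant (p.map C) ((p.map C).comp (X + C X))).eval t =
      Polynomial.resultant p (p.comp (X + C t)) := by
  have hP : (p.map C).map (evalRingHom t) = p := by
    rw [Polynomial.map_map]
    convert p.map_id
    ext; simp
  have hQ : ((p.map C).comp (X + C X)).map (evalRingHom t) = p.comp (X + C t) := by
    rw [Polynomial.map_comp, hP]
    simp
  have hdeg : (p.map C).natDegree = p.natDegree := natDegree_map_eq_of_injective C_injective p
  rw [← coe_evalRingHom, ← resultant_map_map, hP, hQ, ← taylor_apply, ← taylor_apply,
    natDegree_taylor, natDegree_taylor, hdeg]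

theorem resultant_comp_X_add_C_eq_zero_iff {R : Type*} [CommRing R] [IsDomain R] {p : R[X]}
    (hp : p ≠ 0) (hs : p.Splits) (t : R) :
    Polynomial.resultant p (p.comp (X + C t)) = 0 ↔
      ∃ β ∈ p.roots, ∃ α ∈ p.roots, t = β - α := by
  rw [resultant_eq_prod_eval _ _ _ le_rfl hs, mul_eq_zero, pow_eq_zero_iff',
    or_iff_right (by simp [hp]), Multiset.prod_eq_zero_iff]
  simp only [Multiset.mem_map, eval_comp, eval_add, eval_X, eval_C]
  constructor
  · rintro ⟨α, hα, hβ⟩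
    exact ⟨α + t, (mem_roots hp).2 hβ, α, hα, by ring⟩
  · rintro ⟨β, hβ, α, hα, rfl⟩
    exact ⟨α, hα, by rw [add_sub_cancel, ← IsRoot, ← mem_roots hp]; exact hβ⟩

theorem isRoot_resultant_map_C_comp_X_add_C_iff {R : Type*} [CommRing R] [IsDomain R]
    {p : R[X]} (hp : p ≠ 0) (hs : p.Splits) (t : R) :
    (Polynomial.resultant (p.map C) ((p.map C).comp (X + C X))).IsRoot t ↔
      ∃ β ∈ p.roots, ∃ α ∈ p.roots, t = β - α := by
  rw [IsRoot, eval_resultant_map_C_comp_X_add_C, resultant_comp_X_add_C_eq_zero_iff hp hs]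

theorem Matrix.IsHermitian.mem_roots_charpoly_iff {𝕜 n : Type*} [RCLike 𝕜] [Fintype n]
    [DecidableEq n] {A : Matrix n n 𝕜} (hA : A.IsHermitian) {x : 𝕜} :
    x ∈ A.charpoly.roots ↔ ∃ i, (hA.eigenvalues i : 𝕜) = x := by
  simp [hA.roots_charpoly_eq_eigenvalues]

theorem isGreatest_ciSup_sub_ciInf {ι : Type*} [Finite ι] [Nonempty ι] (f : ι → ℝ) :
    IsGreatest {t | ∃ i j, t = f i - f j} ((⨆ i, f i) - ⨅ i, f i) := by
  obtain ⟨imax, hmax⟩ := exists_eq_ciSup_of_finite (f := f)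
  obtain ⟨imin, hmin⟩ := exists_eq_ciInf_of_finite (f := f)
  refine ⟨⟨imax, imin, by rw [hmax, hmin]⟩, ?_⟩
  rintro _ ⟨i, j, rfl⟩
  exact sub_le_sub (le_ciSup (Set.finite_range f).bddAbove i)
    (ciInf_le (Set.finite_range f).bddBelow j)

/-- For a real symmetric matrix `A` whose characteristic polynomial `p` is not `λ^m`,
the spread of `A` is the largest real root of
`R(T) = resultant_λ(p(λ), p(T+λ))`. -/
theorem spread_eq_largest_root_of_resultant (m : ℕ) (A : Matrix (Fin m) (Fin m) ℝ)
    (hA : A.IsHermitian) (hp : A.charpoly ≠ X ^ m) :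
    (_root_.resultant (A.charpoly.map Polynomial.C)
          ((A.charpoly.map Polynomial.C).comp (X + C (X : ℝ[X])))).IsRoot
        ((⨆ i, hA.eigenvalues i) - ⨅ i, hA.eigenvalues i) ∧
      ∀ t : ℝ,
        (_root_.resultant (A.charpoly.map Polynomial.C)
            ((A.charpoly.map Polynomial.C).comp (X + C (X : ℝ[X])))).IsRoot t →
          t ≤ (⨆ i, hA.eigenvalues i) - ⨅ i, hA.eigenvalues i := by
  have : Nonempty (Fin m) := by
    rcases m with _ | m
    · exact absurd (by simp [Matrix.charpoly]) hp
    · exact ⟨0⟩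
  have hroots : ∀ t, (_root_.resultant (A.charpoly.map Polynomial.C)
      ((A.charpoly.map Polynomial.C).comp (X + C (X : ℝ[X])))).IsRoot t ↔
        ∃ i j, t = hA.eigenvalues i - hA.eigenvalues j := by
    intro t
    rw [resultant_eq_polynomial_resultant, isRoot_resultant_map_C_comp_X_add_C_iff
      A.charpoly_monic.ne_zero hA.splits_charpoly]
    simp only [hA.mem_roots_charpoly_iff, RCLike.ofReal_real_eq_id, id, exists_exists_eq_and]
  obtain ⟨hmem, hle⟩ := isGreatest_ciSup_sub_ciInf hA.eigenvalues
  exact ⟨(hroots _).2 hmem, fun t ht => hle ((hroots t).1 ht)⟩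
end

section
/- For m ≥ 2 and a > 0, every m×m real symmetric matrix A with all entries in [−a, a] satisfies spread(A) ≤ a·sqrt(2m²) if m is even, and spread(A) ≤ a·sqrt(2m² − 1) if m is odd. -/
/-!
Since `Σ λᵢ² = Σ aᵢⱼ² ≤ m²a²`, the spread satisfies
`(λ_max - λ_min)² ≤ 2 (λ_max² + λ_min²) ≤ 2m²a²`.

For odd `m`, let `x`, `y` be unit eigenvectors for `λ_max`, `λ_min`. Then
`λ_max - λ_min = Σ aᵢⱼ (xᵢxⱼ - yᵢyⱼ) ≤ a Σ eᵢⱼ (xᵢxⱼ - yᵢyⱼ) ≤ a · spread(E)`, where `E` is the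
sign pattern of `xxᵀ - yyᵀ`, so it suffices to show `spread(E)² ≤ 2m² - 1` for symmetric `±1`
matrices `E`, for which `Σ λᵢ² = m²`. Writing `Q` for the sum of the other squared eigenvalues,
`(λ_max - λ_min)² = 2m² - 2Q - (λ_max + λ_min)²`. If `E` has three pairwise non-proportional
columns, some `v ≠ 0` supported on them is orthogonal to both extreme eigenvectors, and the rows of
`E` restricted to these columns show `‖Ev‖ ≥ ‖v‖`, whence `Q ≥ 1`. Otherwise `rank E ≤ 2`: either
`λ_max + λ_min = tr E`, an odd integer, or one of `λ_max`, `λ_min` vanishes and the spread is at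
most `m`.
-/

open Matrix Finset Submodule

lemma sq_sub_le_two_mul_sum_sq {ι : Type*} [Fintype ι] (f : ι → ℝ) (i j : ι) :
    (f i - f j) ^ 2 ≤ 2 * ∑ k, f k ^ 2 := by
  classical
  rcases eq_or_ne i j with rfl | hij
  · simpa using Finset.sum_nonneg fun k _ => sq_nonneg (f k)
  · have hpair : f i ^ 2 + f j ^ 2 ≤ ∑ k, f k ^ 2 := by
      rw [← Finset.sum_pair (f := fun k => f k ^ 2) hij]
      exact Finset.sum_le_sum_of_subset_of_nonneg (Finset.subset_univ _)
        fun k _ _ => sq_nonneg _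
    nlinarith [sq_nonneg (f i + f j)]

lemma sq_add_sq_add_sq_le_sum_sign_patterns (b₁ b₂ b₃ : ℝ) {p : Fin 3 → ℝ × ℝ}
    (hp : Function.Injective p)
    (hsign : ∀ r, ((p r).1 = 1 ∨ (p r).1 = -1) ∧ ((p r).2 = 1 ∨ (p r).2 = -1)) :
    b₁ ^ 2 + b₂ ^ 2 + b₃ ^ 2 ≤ ∑ r, (b₁ + (p r).1 * b₂ + (p r).2 * b₃) ^ 2 := by
  classical
  set F : ℝ × ℝ → ℝ := fun q => (b₁ + q.1 * b₂ + q.2 * b₃) ^ 2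
  set S := b₁ ^ 2 + b₂ ^ 2 + b₃ ^ 2
  let signs : Finset (ℝ × ℝ) := {(1, 1), (1, -1), (-1, 1), (-1, -1)}
  -- Over all four sign patterns the cross terms cancel, while a single pattern contributes at most
  -- `3 S` by Cauchy–Schwarz; so dropping one pattern still leaves at least `S`.
  have htotal : ∑ q ∈ signs, F q = 4 * S := by
    rw [Finset.sum_insert (by norm_num), Finset.sum_insert (by norm_num),
      Finset.sum_pair (by norm_num)]
    simp only [F, S]; ring
  have hbound : ∀ q ∈ signs, F q ≤ 3 * S := by
    simp only [signs, Finset.mem_insert, Finset.mem_singleton]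
    rintro q (rfl | rfl | rfl | rfl) <;> simp only [F, S] <;>
      nlinarith [sq_nonneg (b₁ - b₂), sq_nonneg (b₁ + b₂), sq_nonneg (b₁ - b₃),
        sq_nonneg (b₁ + b₃), sq_nonneg (b₂ - b₃), sq_nonneg (b₂ + b₃)]
  have hsub : univ.image p ⊆ signs := by
    intro q hq
    obtain ⟨r, -, rfl⟩ := Finset.mem_image.mp hq
    obtain ⟨h₁ | h₁, h₂ | h₂⟩ := hsign r <;> simp [signs, Prod.ext_iff, h₁, h₂]
  have hcard : (signs \ univ.image p).card = 1 := by
    rw [Finset.card_sdiff_of_subset hsub, Finset.card_image_of_injective _ hp]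
    norm_num [signs]
  have hrest : ∑ q ∈ signs \ univ.image p, F q ≤ 3 * S := by
    have := Finset.sum_le_card_nsmul (signs \ univ.image p) F (3 * S)
      fun q hq => hbound q (Finset.sdiff_subset hq)
    rwa [hcard, one_nsmul] at this
  calc S ≤ ∑ q ∈ signs, F q - ∑ q ∈ signs \ univ.image p, F q := by linarith
    _ = ∑ q ∈ univ.image p, F q := by rw [Finset.sum_sdiff_eq_sub hsub]; ring
    _ = ∑ r, F (p r) := Finset.sum_image fun r _ s _ h => hp h

lemma exists_injective_sign_pairs {X : Type*} {f g : X → ℝ} (hf : ∀ x, f x = 1 ∨ f x = -1)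
    (hg : ∀ x, g x = 1 ∨ g x = -1) (hf' : ¬∃ c, ∀ x, f x = c) (hg' : ¬∃ c, ∀ x, g x = c)
    (hfg : ¬∃ c, ∀ x, f x * g x = c) :
    ∃ x : Fin 3 → X, Function.Injective fun r => (f (x r), g (x r)) := by
  push Not at hf' hg' hfg
  obtain ⟨x, -⟩ := hf' 0
  obtain ⟨y, hxy⟩ := hf' (f x)
  by_contra! hno
  have hz (z : X) : (f z, g z) = (f x, g x) ∨ (f z, g z) = (f y, g y) := by
    by_contra! hz
    refine hno ![x, y, z] fun a b hab => ?_
    fin_cases a <;> fin_cases b <;> simp_all [Prod.ext_iff, eq_comm]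
  have hneg {u v : ℝ} (hu : u = 1 ∨ u = -1) (hv : v = 1 ∨ v = -1) (huv : v ≠ u) : v = -u := by
    rcases hu with rfl | rfl <;> rcases hv with rfl | rfl <;> norm_num at *
  by_cases hgxy : g y = g x
  · obtain ⟨z, hz'⟩ := hg' (g x)
    rcases hz z with h | h <;> simp only [Prod.ext_iff] at h <;> simp_all
  · obtain ⟨z, hz'⟩ := hfg (f x * g x)
    rcases hz z with h | h <;> simp only [Prod.ext_iff] at h <;> rw [h.1, h.2] at hz'
    · exact hz' rfl
    · rw [hneg (hf x) (hf y) hxy, hneg (hg x) (hg y) hgxy] at hz'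
      exact hz' (neg_mul_neg _ _)

lemma one_le_sq_sum_of_sign {ι : Type*} [Fintype ι] {s : ι → ℝ} (hs : ∀ i, s i = 1 ∨ s i = -1)
    (hodd : Odd (Fintype.card ι)) : 1 ≤ (∑ i, s i) ^ 2 := by
  classical
  set k := #{i | s i = -1}
  have hcount : ∑ i, s i = ((Fintype.card ι - 2 * k : ℤ) : ℝ) := by
    calc ∑ i, s i = ∑ i, (1 - 2 * if s i = -1 then (1 : ℝ) else 0) :=
          Finset.sum_congr rfl fun i _ => by rcases hs i with h | h <;> norm_num [h]
      _ = _ := by rw [Finset.sum_sub_distrib, ← Finset.mul_sum, Finset.sum_boole]; simp [k]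
  have hz : Odd ((Fintype.card ι : ℤ) - 2 * k) :=
    ((Int.odd_coe_nat _).mpr hodd).sub_even (even_two_mul _)
  rw [hcount]
  exact_mod_cast (one_le_sq_iff_one_le_abs _).mpr
    (Int.one_le_abs fun h => Int.not_odd_zero (h ▸ hz))

lemma rank_le_two_of_sign {m n : Type*} [Fintype m] [Fintype n] {E : Matrix m n ℝ}
    (hpm : ∀ i j, E i j = 1 ∨ E i j = -1)
    (h : ∀ j k l, (∃ c, ∀ x, E x j * E x k = c) ∨ (∃ c, ∀ x, E x j * E x l = c) ∨
      ∃ c, ∀ x, E x k * E x l = c) :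
    E.rank ≤ 2 := by
  classical
  have hspan {j k : n} (hjk : ∃ c, ∀ x, E x j * E x k = c) : E.col k ∈ span ℝ {E.col j} := by
    obtain ⟨c, hc⟩ := hjk
    refine mem_span_singleton.mpr ⟨c, funext fun x => ?_⟩
    rw [Pi.smul_apply, col_apply, col_apply, ← hc x, smul_eq_mul]
    rcases hpm x j with h | h <;> rw [h] <;> ring
  rcases isEmpty_or_nonempty n with hn | ⟨⟨j₀⟩⟩
  · exact (rank_le_card_width E).trans (by simp)
  obtain ⟨k₀, hk₀⟩ : ∃ k₀, ∀ l, (∃ c, ∀ x, E x j₀ * E x l = c) ∨ ∃ c, ∀ x, E x k₀ * E x l = c := by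
    by_cases hall : ∀ l, ∃ c, ∀ x, E x j₀ * E x l = c
    · exact ⟨j₀, fun l => Or.inl (hall l)⟩
    · obtain ⟨k₀, hk₀⟩ := not_forall.mp hall
      exact ⟨k₀, fun l => (h j₀ k₀ l).resolve_left hk₀⟩
  let t : Finset (m → ℝ) := {E.col j₀, E.col k₀}
  have hcols : Set.range E.col ⊆ ↑(span ℝ (t : Set (m → ℝ))) := by
    rintro _ ⟨l, rfl⟩
    rcases hk₀ l with hl | hl <;> exact span_mono (by simp [t]) (hspan hl)
  rw [rank_eq_finrank_span_cols]
  exact (finrank_mono (span_le.mpr hcols)).trans ((finrank_span_finset_le_card _).trans card_le_two)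

lemma mulVec_submatrix_one_mulVec {R m n ι : Type*} [Semiring R] [Fintype n] [DecidableEq n]
    [Fintype ι] (M : Matrix m n R) (j : ι → n) (β : ι → R) :
    M *ᵥ ((1 : Matrix n n R).submatrix id j *ᵥ β) = M.submatrix id j *ᵥ β := by
  rw [mulVec_mulVec, ← submatrix_id_id M, ← submatrix_mul _ _ _ _ _ Function.bijective_id,
    Matrix.mul_one]
  rfl

lemma submatrix_one_mulVec_dotProduct_self {R n ι : Type*} [CommSemiring R] [Fintype n]
    [DecidableEq n] [Fintype ι] [DecidableEq ι] {j : ι → n} (hj : Function.Injective j)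
    (β : ι → R) :
    ((1 : Matrix n n R).submatrix id j *ᵥ β) ⬝ᵥ ((1 : Matrix n n R).submatrix id j *ᵥ β) =
      β ⬝ᵥ β := by
  rw [dotProduct_mulVec, ← mulVec_transpose, mulVec_mulVec, transpose_submatrix, transpose_one,
    ← submatrix_mul _ _ _ _ _ Function.bijective_id, Matrix.mul_one]
  simp [submatrix_one j hj]

lemma dotProduct_mulVec_sub_dotProduct_mulVec {R n : Type*} [CommRing R] [Fintype n]
    (M : Matrix n n R) (x y : n → R) :
    x ⬝ᵥ (M *ᵥ x) - y ⬝ᵥ (M *ᵥ y) = ∑ i, ∑ j, M i j * (x i * x j - y i * y j) := by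
  simp only [dotProduct, mulVec, Finset.mul_sum, ← Finset.sum_sub_distrib]
  exact Finset.sum_congr rfl fun i _ => Finset.sum_congr rfl fun j _ => by ring

namespace Matrix.IsHermitian
variable {n : Type*} [Fintype n] [DecidableEq n] {A : Matrix n n ℝ} (hA : A.IsHermitian)

lemma eigenvectorBasis_dotProduct_self (i : n) :
    ⇑(hA.eigenvectorBasis i) ⬝ᵥ ⇑(hA.eigenvectorBasis i) = 1 := by
  have := hA.eigenvectorBasis.inner_eq_one i
  rwa [EuclideanSpace.inner_eq_star_dotProduct, star_trivial] at this

lemma sum_dotProduct_eigenvectorBasis_mul (v w : n → ℝ) :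
    ∑ k, (⇑(hA.eigenvectorBasis k) ⬝ᵥ v) * (⇑(hA.eigenvectorBasis k) ⬝ᵥ w) = v ⬝ᵥ w := by
  simpa [EuclideanSpace.inner_eq_star_dotProduct, dotProduct_comm] using
    hA.eigenvectorBasis.sum_inner_mul_inner (WithLp.toLp 2 v) (WithLp.toLp 2 w)

lemma eigenvectorBasis_dotProduct_mulVec (k : n) (v : n → ℝ) :
    ⇑(hA.eigenvectorBasis k) ⬝ᵥ (A *ᵥ v) = hA.eigenvalues k * (⇑(hA.eigenvectorBasis k) ⬝ᵥ v) := by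
  rw [dotProduct_mulVec, ← mulVec_transpose, (isHermitian_iff_isSymm.mp hA).eq,
    mulVec_eigenvectorBasis, smul_dotProduct, smul_eq_mul]

lemma eigenvalues_eq_dotProduct (i : n) :
    hA.eigenvalues i = ⇑(hA.eigenvectorBasis i) ⬝ᵥ (A *ᵥ ⇑(hA.eigenvectorBasis i)) := by
  simpa using hA.eigenvalues_eq i

lemma sum_sq_dotProduct_eigenvectorBasis (v : n → ℝ) :
    ∑ k, (⇑(hA.eigenvectorBasis k) ⬝ᵥ v) ^ 2 = v ⬝ᵥ v := by
  simpa only [sq] using hA.sum_dotProduct_eigenvectorBasis_mul v v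

lemma dotProduct_mulVec_eq_sum (v : n → ℝ) :
    v ⬝ᵥ (A *ᵥ v) = ∑ k, hA.eigenvalues k * (⇑(hA.eigenvectorBasis k) ⬝ᵥ v) ^ 2 := by
  rw [← hA.sum_dotProduct_eigenvectorBasis_mul]
  simp only [eigenvectorBasis_dotProduct_mulVec]
  exact Finset.sum_congr rfl fun k _ => by ring

lemma mulVec_dotProduct_mulVec_eq_sum (v : n → ℝ) :
    (A *ᵥ v) ⬝ᵥ (A *ᵥ v) = ∑ k, hA.eigenvalues k ^ 2 * (⇑(hA.eigenvectorBasis k) ⬝ᵥ v) ^ 2 := by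
  rw [← hA.sum_dotProduct_eigenvectorBasis_mul]
  simp only [eigenvectorBasis_dotProduct_mulVec]
  exact Finset.sum_congr rfl fun k _ => by ring

lemma sum_eigenvalues_sq : ∑ k, hA.eigenvalues k ^ 2 = ∑ i, ∑ j, A i j ^ 2 := by
  have hrow (i : n) :
      ∑ j, A i j ^ 2 = ∑ k, hA.eigenvalues k ^ 2 * hA.eigenvectorBasis k i ^ 2 := by
    calc ∑ j, A i j ^ 2 = A i ⬝ᵥ A i := by simp only [dotProduct, sq]
      _ = ∑ k, (⇑(hA.eigenvectorBasis k) ⬝ᵥ A i) ^ 2 :=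
        (hA.sum_sq_dotProduct_eigenvectorBasis _).symm
      _ = _ := Finset.sum_congr rfl fun k _ => by
        rw [dotProduct_comm, ← mulVec.eq_1, hA.mulVec_eigenvectorBasis, Pi.smul_apply,
          smul_eq_mul, mul_pow]
  simp only [hrow]
  rw [Finset.sum_comm]
  refine Finset.sum_congr rfl fun k _ => ?_
  have hnorm := hA.eigenvectorBasis_dotProduct_self k
  simp only [dotProduct, ← sq] at hnorm
  rw [← Finset.mul_sum, hnorm, mul_one]

lemma mulVec_dotProduct_mulVec_le (s : Finset n) {v : n → ℝ}
    (hv : ∀ k ∈ s, ⇑(hA.eigenvectorBasis k) ⬝ᵥ v = 0) :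
    (A *ᵥ v) ⬝ᵥ (A *ᵥ v) ≤ (∑ k ∈ sᶜ, hA.eigenvalues k ^ 2) * (v ⬝ᵥ v) := by
  have hcoord (k : n) : (⇑(hA.eigenvectorBasis k) ⬝ᵥ v) ^ 2 ≤ v ⬝ᵥ v := by
    rw [← hA.sum_sq_dotProduct_eigenvectorBasis]
    exact Finset.single_le_sum (f := fun k => (⇑(hA.eigenvectorBasis k) ⬝ᵥ v) ^ 2)
      (fun k _ => sq_nonneg _) (Finset.mem_univ k)
  rw [hA.mulVec_dotProduct_mulVec_eq_sum, ← Finset.sum_compl_add_sum s,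
    Finset.sum_eq_zero (s := s) fun k hk => by rw [hv k hk]; ring, add_zero, Finset.sum_mul]
  exact Finset.sum_le_sum fun k _ => mul_le_mul_of_nonneg_left (hcoord k) (sq_nonneg _)

lemma le_sum_compl_eigenvalues_sq {ι : Type*} [Fintype ι] (s : Finset n) (P : Matrix n ι ℝ)
    (hs : s.card < Fintype.card ι) (hP : ∀ β, (P *ᵥ β) ⬝ᵥ (P *ᵥ β) = β ⬝ᵥ β) {c : ℝ}
    (hc : ∀ β, c * (β ⬝ᵥ β) ≤ (A *ᵥ P *ᵥ β) ⬝ᵥ (A *ᵥ P *ᵥ β)) :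
    c ≤ ∑ k ∈ sᶜ, hA.eigenvalues k ^ 2 := by
  let B : Matrix s n ℝ := Matrix.of fun k => hA.eigenvectorBasis k
  have hker : LinearMap.ker (B * P).mulVecLin ≠ ⊥ :=
    LinearMap.ker_ne_bot_of_finrank_lt (by simpa using hs)
  obtain ⟨β, hβker, hβ⟩ := (Submodule.ne_bot_iff _).mp hker
  have horth : ∀ k ∈ s, ⇑(hA.eigenvectorBasis k) ⬝ᵥ (P *ᵥ β) = 0 := fun k hk => by
    have := congrFun (LinearMap.mem_ker.mp hβker) ⟨k, hk⟩
    rwa [mulVecLin_apply, ← mulVec_mulVec] at this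
  have hpos : 0 < β ⬝ᵥ β := lt_of_le_of_ne (Finset.sum_nonneg fun i _ => mul_self_nonneg _)
    (Ne.symm (mt dotProduct_self_eq_zero.mp hβ))
  have := (hc β).trans ((hA.mulVec_dotProduct_mulVec_le s horth).trans_eq (by rw [hP]))
  exact le_of_mul_le_mul_right this hpos

lemma dotProduct_mulVec_le_iSup_mul (v : n → ℝ) :
    v ⬝ᵥ (A *ᵥ v) ≤ (⨆ i, hA.eigenvalues i) * (v ⬝ᵥ v) := by
  rw [hA.dotProduct_mulVec_eq_sum, ← hA.sum_sq_dotProduct_eigenvectorBasis, Finset.mul_sum]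
  exact Finset.sum_le_sum fun k _ => mul_le_mul_of_nonneg_right
    (le_ciSup (Finite.bddAbove_range _) k) (sq_nonneg _)

lemma iInf_mul_le_dotProduct_mulVec (v : n → ℝ) :
    (⨅ i, hA.eigenvalues i) * (v ⬝ᵥ v) ≤ v ⬝ᵥ (A *ᵥ v) := by
  rw [hA.dotProduct_mulVec_eq_sum, ← hA.sum_sq_dotProduct_eigenvectorBasis, Finset.mul_sum]
  exact Finset.sum_le_sum fun k _ => mul_le_mul_of_nonneg_right
    (ciInf_le (Finite.bddBelow_range _) k) (sq_nonneg _)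

noncomputable def spread : ℝ := (⨆ i, hA.eigenvalues i) - (⨅ i, hA.eigenvalues i)

lemma exists_spread_eq [Nonempty n] : ∃ i j, hA.spread = hA.eigenvalues i - hA.eigenvalues j := by
  obtain ⟨i, hi⟩ := exists_eq_ciSup_of_finite (f := hA.eigenvalues)
  obtain ⟨j, hj⟩ := exists_eq_ciInf_of_finite (f := hA.eigenvalues)
  exact ⟨i, j, by rw [spread, hi, hj]⟩

lemma sub_dotProduct_mulVec_le_spread {x y : n → ℝ} (hx : x ⬝ᵥ x = 1) (hy : y ⬝ᵥ y = 1) :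
    x ⬝ᵥ (A *ᵥ x) - y ⬝ᵥ (A *ᵥ y) ≤ hA.spread := by
  have hmax := hA.dotProduct_mulVec_le_iSup_mul x
  have hmin := hA.iInf_mul_le_dotProduct_mulVec y
  rw [hx] at hmax
  rw [hy] at hmin
  rw [spread]
  linarith

lemma spread_sq_le_two_mul_sum_sq : hA.spread ^ 2 ≤ 2 * ∑ i, ∑ j, A i j ^ 2 := by
  rcases isEmpty_or_nonempty n with hn | hn
  · simp [spread]
  obtain ⟨i, j, hij⟩ := hA.exists_spread_eq
  rw [hij, ← hA.sum_eigenvalues_sq]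
  exact sq_sub_le_two_mul_sum_sq _ i j

lemma spread_le_mul_sqrt {a : ℝ} (ha : 0 ≤ a) (hent : ∀ i j, |A i j| ≤ a) :
    hA.spread ≤ a * √(2 * Fintype.card n ^ 2) := by
  have hsum : ∑ i, ∑ j, A i j ^ 2 ≤ Fintype.card n ^ 2 * a ^ 2 := by
    calc ∑ i, ∑ j, A i j ^ 2 ≤ ∑ _i : n, ∑ _j : n, a ^ 2 :=
          Finset.sum_le_sum fun i _ => Finset.sum_le_sum fun j _ =>
            sq_le_sq' (abs_le.mp (hent i j)).1 (abs_le.mp (hent i j)).2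
      _ = Fintype.card n ^ 2 * a ^ 2 := by
          simp only [Finset.sum_const, Finset.card_univ, nsmul_eq_mul]; ring
  calc hA.spread ≤ √(a ^ 2 * (2 * Fintype.card n ^ 2)) := by
        refine (le_abs_self _).trans (Real.abs_le_sqrt ?_)
        nlinarith [hA.spread_sq_le_two_mul_sum_sq]
    _ = a * √(2 * Fintype.card n ^ 2) := by rw [Real.sqrt_mul (sq_nonneg a), Real.sqrt_sq ha]

lemma exists_sign_matrix_spread_le [Nonempty n] {a : ℝ} (hent : ∀ i j, |A i j| ≤ a) :
    ∃ (E : Matrix n n ℝ) (hE : E.IsHermitian),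
      (∀ i j, E i j = 1 ∨ E i j = -1) ∧ hA.spread ≤ a * hE.spread := by
  obtain ⟨I, J, hIJ⟩ := hA.exists_spread_eq
  set x : n → ℝ := ⇑(hA.eigenvectorBasis I)
  set y : n → ℝ := ⇑(hA.eigenvectorBasis J)
  set d : n → n → ℝ := fun i j => x i * x j - y i * y j
  let E : Matrix n n ℝ := Matrix.of fun i j => if 0 ≤ d i j then 1 else -1
  have hE : E.IsHermitian :=
    isHermitian_iff_isSymm.mpr (IsSymm.ext fun i j => by simp only [E, d, of_apply, mul_comm])
  have hentry (i j : n) : A i j * d i j ≤ a * (E i j * d i j) := by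
    have hEd : E i j * d i j = |d i j| := by
      simp only [E, of_apply]
      split_ifs with h
      · rw [one_mul, abs_of_nonneg h]
      · rw [abs_of_neg (not_le.mp h), neg_one_mul]
    calc A i j * d i j ≤ |A i j| * |d i j| := by rw [← abs_mul]; exact le_abs_self _
      _ ≤ a * (E i j * d i j) := by
          rw [hEd]; exact mul_le_mul_of_nonneg_right (hent i j) (abs_nonneg _)
  refine ⟨E, hE, fun i j => by simp only [E, of_apply]; split_ifs <;> simp, ?_⟩
  have ha : 0 ≤ a := (abs_nonneg _).trans (hent I I)
  calc hA.spread = x ⬝ᵥ (A *ᵥ x) - y ⬝ᵥ (A *ᵥ y) := by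
        rw [hIJ, hA.eigenvalues_eq_dotProduct I, hA.eigenvalues_eq_dotProduct J]
    _ ≤ a * (x ⬝ᵥ (E *ᵥ x) - y ⬝ᵥ (E *ᵥ y)) := by
        rw [dotProduct_mulVec_sub_dotProduct_mulVec, dotProduct_mulVec_sub_dotProduct_mulVec,
          Finset.mul_sum]
        exact Finset.sum_le_sum fun i _ => by
          rw [Finset.mul_sum]; exact Finset.sum_le_sum fun j _ => hentry i j
    _ ≤ a * hE.spread := mul_le_mul_of_nonneg_left
        (hE.sub_dotProduct_mulVec_le_spread (hA.eigenvectorBasis_dotProduct_self I)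
          (hA.eigenvectorBasis_dotProduct_self J)) ha

lemma eigenvalues_compl_eq_zero_or_of_rank_le_two (hrank : A.rank ≤ 2) {I J : n} (hIJ : I ≠ J) :
    (∀ k ∈ ({I, J} : Finset n)ᶜ, hA.eigenvalues k = 0) ∨
      hA.eigenvalues I = 0 ∨ hA.eigenvalues J = 0 := by
  by_contra! h
  obtain ⟨⟨k, hk, hμk⟩, hI, hJ⟩ := h
  simp only [Finset.mem_compl, Finset.mem_insert, Finset.mem_singleton, not_or] at hk
  rw [hA.rank_eq_card_non_zero_eigs, Fintype.card_subtype] at hrank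
  have hsub : {I, J, k} ⊆ ({l | hA.eigenvalues l ≠ 0} : Finset n) := by
    simp [Finset.insert_subset_iff, hI, hJ, hμk]
  have := Finset.card_le_card hsub
  rw [Finset.card_eq_three.mpr ⟨I, J, k, hIJ, Ne.symm hk.1, Ne.symm hk.2, rfl⟩] at this
  omega

lemma one_le_sq_add_or_eigenvalues_eq_zero_of_sign (hpm : ∀ i j, A i j = 1 ∨ A i j = -1)
    (hodd : Odd (Fintype.card n)) (hrank : A.rank ≤ 2) {I J : n} (hIJ : I ≠ J) :
    1 ≤ (hA.eigenvalues I + hA.eigenvalues J) ^ 2 ∨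
      hA.eigenvalues I = 0 ∨ hA.eigenvalues J = 0 := by
  refine (hA.eigenvalues_compl_eq_zero_or_of_rank_le_two hrank hIJ).imp_left fun hmid => ?_
  have htrace := hA.trace_eq_sum_eigenvalues
  simp only [RCLike.ofReal_real_eq_id, id, trace, diag_apply] at htrace
  rw [← Finset.sum_compl_add_sum {I, J} hA.eigenvalues, Finset.sum_eq_zero hmid, zero_add,
    Finset.sum_pair hIJ] at htrace
  rw [← htrace]
  exact one_le_sq_sum_of_sign (fun i => hpm i i) hodd

lemma one_le_sum_compl_eigenvalues_sq_of_sign (hpm : ∀ i j, A i j = 1 ∨ A i j = -1)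
    {s : Finset n} (hs : s.card < 3) {j₁ j₂ j₃ : n}
    (h₁₂ : ¬∃ c, ∀ x, A x j₁ * A x j₂ = c) (h₁₃ : ¬∃ c, ∀ x, A x j₁ * A x j₃ = c)
    (h₂₃ : ¬∃ c, ∀ x, A x j₂ * A x j₃ = c) :
    1 ≤ ∑ k ∈ sᶜ, hA.eigenvalues k ^ 2 := by
  have hsign (x k l : n) : A x k * A x l = 1 ∨ A x k * A x l = -1 := by
    rcases hpm x k with h | h <;> rcases hpm x l with h' | h' <;> norm_num [h, h']
  have hself (l : n) : ∃ c, ∀ x, A x l * A x l = c :=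
    ⟨1, fun x => by rcases hpm x l with h | h <;> norm_num [h]⟩
  set j : Fin 3 → n := ![j₁, j₂, j₃]
  have hne {k l : n} (hkl : ¬∃ c, ∀ x, A x k * A x l = c) : k ≠ l := by
    rintro rfl
    exact hkl (hself k)
  have hj : Function.Injective j := by
    intro a b hab
    fin_cases a <;> fin_cases b <;>
      simp [j, hne h₁₂, hne h₁₃, hne h₂₃, (hne h₁₂).symm, (hne h₁₃).symm, (hne h₂₃).symm] at hab ⊢
  have hprod (x : n) : A x j₁ * A x j₂ * (A x j₁ * A x j₃) = A x j₂ * A x j₃ := by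
    rcases hpm x j₁ with h | h <;> rw [h] <;> ring
  obtain ⟨x, hx⟩ := exists_injective_sign_pairs (f := fun x => A x j₁ * A x j₂)
    (g := fun x => A x j₁ * A x j₃) (hsign · _ _) (hsign · _ _) h₁₂ h₁₃ (by simpa only [hprod])
  have hxinj : Function.Injective x := fun a b hab => hx (by simp only [hab])
  refine hA.le_sum_compl_eigenvalues_sq s ((1 : Matrix n n ℝ).submatrix id j) (by simpa using hs)
    (submatrix_one_mulVec_dotProduct_self hj) fun β => ?_
  rw [one_mul, mulVec_submatrix_one_mulVec]
  set w := A.submatrix id j *ᵥ β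
  have hrow (r : Fin 3) : w (x r) ^ 2 =
      (β 0 + A (x r) j₁ * A (x r) j₂ * β 1 + A (x r) j₁ * A (x r) j₃ * β 2) ^ 2 := by
    simp only [w, mulVec, dotProduct, Fin.sum_univ_three, submatrix_apply, id, j,
      Matrix.cons_val_zero, Matrix.cons_val_one, Matrix.cons_val_two, Matrix.tail_cons,
      Matrix.head_cons]
    rcases hpm (x r) j₁ with h | h <;> rw [h] <;> ring
  calc β ⬝ᵥ β = β 0 ^ 2 + β 1 ^ 2 + β 2 ^ 2 := by
        simp [dotProduct, Fin.sum_univ_three, sq, add_assoc]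
    _ ≤ ∑ r, (β 0 + A (x r) j₁ * A (x r) j₂ * β 1 + A (x r) j₁ * A (x r) j₃ * β 2) ^ 2 :=
        sq_add_sq_add_sq_le_sum_sign_patterns _ _ _ hx fun r => ⟨hsign _ _ _, hsign _ _ _⟩
    _ = ∑ r, w (x r) ^ 2 := by simp only [hrow]
    _ ≤ ∑ i, w i ^ 2 := by
        rw [← Finset.sum_image (f := fun i => w i ^ 2) fun a _ b _ h => hxinj h]
        exact Finset.sum_le_sum_of_subset_of_nonneg (Finset.subset_univ _)
          fun _ _ _ => sq_nonneg _
    _ = w ⬝ᵥ w := by simp only [dotProduct, sq]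

theorem spread_sq_le_of_sign (hpm : ∀ i j, A i j = 1 ∨ A i j = -1)
    (hodd : Odd (Fintype.card n)) :
    hA.spread ^ 2 ≤ 2 * Fintype.card n ^ 2 - 1 := by
  have : Nonempty n := Fintype.card_pos_iff.mp hodd.pos
  have hcard : (1 : ℝ) ≤ Fintype.card n := by exact_mod_cast hodd.pos
  obtain ⟨I, J, hIJ⟩ := hA.exists_spread_eq
  rw [hIJ]
  rcases eq_or_ne I J with rfl | hne
  · nlinarith
  set μ := hA.eigenvalues
  set Q := ∑ k ∈ {I, J}ᶜ, μ k ^ 2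
  have hQ : 0 ≤ Q := Finset.sum_nonneg fun k _ => sq_nonneg _
  have hsum : Q + (μ I ^ 2 + μ J ^ 2) = Fintype.card n ^ 2 := by
    have hentry (i j : n) : A i j ^ 2 = 1 := by rcases hpm i j with h | h <;> norm_num [h]
    rw [← Finset.sum_pair (f := fun k => μ k ^ 2) hne, Finset.sum_compl_add_sum,
      hA.sum_eigenvalues_sq]
    simp [hentry, sq]
  suffices h : 1 ≤ Q ∨ 1 ≤ (μ I + μ J) ^ 2 ∨ μ I = 0 ∨ μ J = 0 by
    rcases h with h | h | h | h
    · nlinarith [sq_nonneg (μ I + μ J)]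
    · nlinarith
    · rw [h]; nlinarith
    · rw [h]; nlinarith
  by_cases hpar : ∀ j k l, (∃ c, ∀ x, A x j * A x k = c) ∨ (∃ c, ∀ x, A x j * A x l = c) ∨
      ∃ c, ∀ x, A x k * A x l = c
  · exact Or.inr (hA.one_le_sq_add_or_eigenvalues_eq_zero_of_sign hpm hodd
      (rank_le_two_of_sign hpm hpar) hne)
  · obtain ⟨j, k, l, h⟩ : ∃ j k l, (¬∃ c, ∀ x, A x j * A x k = c) ∧
        (¬∃ c, ∀ x, A x j * A x l = c) ∧ ¬∃ c, ∀ x, A x k * A x l = c := by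
      simpa only [not_forall, not_or] using hpar
    exact Or.inl (hA.one_le_sum_compl_eigenvalues_sq_of_sign hpm
      (card_le_two.trans_lt (by norm_num)) h.1 h.2.1 h.2.2)

end Matrix.IsHermitian

theorem zhan_spread_bound_general (m : ℕ) (a : ℝ) (ha : 0 < a)
    (A : Matrix (Fin m) (Fin m) ℝ) (hA : A.IsHermitian)
    (hentries : ∀ i j, A i j ∈ Set.Icc (-a) a) :
    (Even m →
        (⨆ i, hA.eigenvalues i) - (⨅ i, hA.eigenvalues i) ≤
          a * Real.sqrt (2 * (m : ℝ) ^ 2)) ∧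
      (Odd m →
        (⨆ i, hA.eigenvalues i) - (⨅ i, hA.eigenvalues i) ≤
          a * Real.sqrt (2 * (m : ℝ) ^ 2 - 1)) := by
  have habs (i j : Fin m) : |A i j| ≤ a := abs_le.mpr (hentries i j)
  refine ⟨fun _ => ?_, fun hodd => ?_⟩
  · have hspread := hA.spread_le_mul_sqrt ha.le habs
    rwa [Fintype.card_fin] at hspread
  have : Nonempty (Fin m) := ⟨⟨0, hodd.pos⟩⟩
  obtain ⟨E, hE, hpm, hle⟩ := hA.exists_sign_matrix_spread_le habs
  have hEspread : hE.spread ≤ √(2 * m ^ 2 - 1) := by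
    refine (le_abs_self _).trans (Real.abs_le_sqrt ?_)
    simpa only [Fintype.card_fin] using hE.spread_sq_le_of_sign hpm (by rwa [Fintype.card_fin])
  exact hle.trans (mul_le_mul_of_nonneg_left hEspread ha.le)

/-- Zhan's theorem (2005): for `m ≥ 2`, `a > 0`, and a real symmetric `m × m` matrix `A`
with entries in `[-a, a]`, the spread of `A` is at most `a √(2m²)` if `m` is even and
at most `a √(2m² - 1)` if `m` is odd. -/
theorem zhan_spread_bound (m : ℕ) (hm : 2 ≤ m) (a : ℝ) (ha : 0 < a)
    (A : Matrix (Fin m) (Fin m) ℝ) (hA : A.IsHermitian)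
    (hentries : ∀ i j, A i j ∈ Set.Icc (-a) a) :
    (Even m →
        (⨆ i, hA.eigenvalues i) - (⨅ i, hA.eigenvalues i) ≤
          a * Real.sqrt (2 * (m : ℝ) ^ 2)) ∧
      (Odd m →
        (⨆ i, hA.eigenvalues i) - (⨅ i, hA.eigenvalues i) ≤
          a * Real.sqrt (2 * (m : ℝ) ^ 2 - 1)) :=
  zhan_spread_bound_general m a ha A hA hentries
end

section
/- Let m = 3q with q ≥ 1, and let B be the m×m symmetric block matrix with the top-left q×q block all zeros and all other entries equal to 1. Then B has rank 2 and spread(B) = 2√3·q. -/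
/-!
Write `B = 𝟙𝟙ᵀ - eeᵀ`, where `e` is the indicator of the first `q` coordinates. Then
`rank B ≤ 2`, `tr B = 2q` and `tr B² = 8q²`, so the nonzero eigenvalues `λ, μ` of `B` (at most
two) satisfy `λ + μ = 2q` and `λ² + μ² = 8q²`. Hence `λμ = -2q² < 0`: there are exactly two of
them, of opposite signs, so they are the extreme eigenvalues and
`(λ - μ)² = 2(λ² + μ²) - (λ + μ)² = 12q²`.
-/

open Matrix Finset

theorem iSup_sub_iInf_eq_of_support_subset_pair {ι : Type*} [Finite ι] {f : ι → ℝ} {a b : ι}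
    (hsupp : ∀ i, f i ≠ 0 → i = a ∨ i = b) (ha : f a < 0) (hb : 0 < f b) :
    (⨆ i, f i) - ⨅ i, f i = f b - f a := by
  have : Nonempty ι := ⟨a⟩
  have hbounds : ∀ i, f a ≤ f i ∧ f i ≤ f b := by
    intro i
    by_cases hi : f i = 0
    · exact ⟨hi ▸ ha.le, hi ▸ hb.le⟩
    · rcases hsupp i hi with rfl | rfl <;> constructor <;> linarith
  have hsup : ⨆ i, f i = f b :=
    le_antisymm (ciSup_le fun i => (hbounds i).2) (le_ciSup (Set.finite_range f).bddAbove b)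
  have hinf : ⨅ i, f i = f a :=
    le_antisymm (ciInf_le (Set.finite_range f).bddBelow a) (le_ciInf fun i => (hbounds i).1)
  rw [hsup, hinf]

theorem card_support_eq_two_and_iSup_sub_iInf_eq {ι : Type*} [Fintype ι] [DecidableEq ι]
    (f : ι → ℝ) (hcard : #{i | f i ≠ 0} ≤ 2) (hsq : (∑ i, f i) ^ 2 < ∑ i, f i ^ 2) :
    #{i | f i ≠ 0} = 2 ∧ (⨆ i, f i) - ⨅ i, f i = √(2 * ∑ i, f i ^ 2 - (∑ i, f i) ^ 2) := by
  set s : Finset ι := {i | f i ≠ 0} with hs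
  have hsum : ∑ i ∈ s, f i = ∑ i, f i := sum_filter_ne_zero _
  have hsumsq : ∑ i ∈ s, f i ^ 2 = ∑ i, f i ^ 2 :=
    sum_filter_of_ne fun i _ h => by simpa using h
  have hmem : ∀ i, f i ≠ 0 → i ∈ s := by simp [hs]
  rw [← hsum, ← hsumsq] at hsq
  interval_cases hs_card : s.card
  · simp [card_eq_zero.mp hs_card] at hsq
  · obtain ⟨a, ha⟩ := card_eq_one.mp hs_card
    simp [ha] at hsq
  · obtain ⟨a, b, hab, hab_eq⟩ := card_eq_two.mp hs_card
    have hsupp : ∀ i, f i ≠ 0 → i = a ∨ i = b := by simpa [hab_eq] using hmem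
    rw [hab_eq, sum_pair hab, sum_pair hab] at hsq
    have hspread : 2 * ∑ i, f i ^ 2 - (∑ i, f i) ^ 2 = (f b - f a) ^ 2 := by
      rw [← hsum, ← hsumsq, hab_eq, sum_pair hab, sum_pair hab]; ring
    refine ⟨rfl, ?_⟩
    rw [hspread, Real.sqrt_sq_eq_abs]
    rcases mul_neg_iff.mp (show f a * f b < 0 by linarith) with ⟨ha, hb⟩ | ⟨ha, hb⟩
    · rw [iSup_sub_iInf_eq_of_support_subset_pair (fun i hi => (hsupp i hi).symm) hb ha,
        abs_sub_comm, abs_of_pos (by linarith)]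
    · rw [iSup_sub_iInf_eq_of_support_subset_pair hsupp ha hb, abs_of_pos (by linarith)]

namespace Matrix

theorem rank_add_le {m n K : Type*} [Fintype n] [Field K] (A B : Matrix m n K) :
    (A + B).rank ≤ A.rank + B.rank := by
  unfold rank
  rw [mulVecLin_add]
  exact (Submodule.finrank_mono (LinearMap.range_add_le _ _)).trans
    (Submodule.finrank_add_le_finrank_add_finrank _ _)

theorem rank_vecMulVec_sub_vecMulVec_le {m n K : Type*} [Fintype n] [Field K]
    (u w : m → K) (v x : n → K) : (vecMulVec u v - vecMulVec w x).rank ≤ 2 := by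
  rw [sub_eq_add_neg, ← neg_vecMulVec]
  exact (rank_add_le _ _).trans (add_le_add (rank_vecMulVec_le _ _) (rank_vecMulVec_le _ _))

theorem trace_mul_self_vecMulVec_sub_vecMulVec {n R : Type*} [Fintype n] [CommRing R]
    (u v : n → R) :
    ((vecMulVec u u - vecMulVec v v) * (vecMulVec u u - vecMulVec v v)).trace
      = (u ⬝ᵥ u) ^ 2 - 2 * (u ⬝ᵥ v) ^ 2 + (v ⬝ᵥ v) ^ 2 := by
  simp only [sub_mul, mul_sub, vecMulVec_mul_vecMulVec, trace_sub, trace_vecMulVec,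
    dotProduct_smul, smul_eq_mul, dotProduct_comm v u]
  ring

theorem boole_dotProduct_boole {n R : Type*} [Fintype n] [NonAssocSemiring R] (p : n → Prop)
    [DecidablePred p] :
    ((fun i => if p i then 1 else 0 : n → R) ⬝ᵥ fun i => if p i then 1 else 0) = #{i | p i} := by
  simp +contextual [dotProduct, sum_boole]

namespace IsHermitian

variable {n : Type*} [Fintype n] [DecidableEq n]

theorem trace_mul_self {𝕜 : Type*} [RCLike 𝕜] {A : Matrix n n 𝕜} (hA : A.IsHermitian) :
    (A * A).trace = ∑ i, ((hA.eigenvalues i ^ 2 : ℝ) : 𝕜) := by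
  conv_lhs => rw [hA.spectral_theorem, ← map_mul]
  rw [Unitary.conjStarAlgAut_apply, trace_mul_cycle, Unitary.coe_star_mul_self, one_mul,
    diagonal_mul_diagonal, trace_diagonal]
  simp [sq]

theorem rank_eq_two_and_iSup_sub_iInf_eigenvalues {A : Matrix n n ℝ} (hA : A.IsHermitian)
    (hrank : A.rank ≤ 2) (htrace : A.trace ^ 2 < (A * A).trace) :
    A.rank = 2 ∧ (⨆ i, hA.eigenvalues i) - (⨅ i, hA.eigenvalues i)
      = √(2 * (A * A).trace - A.trace ^ 2) := by
  have hrank_eq : A.rank = #{i | hA.eigenvalues i ≠ 0} := by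
    rw [hA.rank_eq_card_non_zero_eigs, Fintype.card_subtype]
  have hsum : A.trace = ∑ i, hA.eigenvalues i := by simpa using hA.trace_eq_sum_eigenvalues
  have hsumsq : (A * A).trace = ∑ i, hA.eigenvalues i ^ 2 := by simpa using hA.trace_mul_self
  rw [hrank_eq] at hrank ⊢
  rw [hsum, hsumsq] at htrace ⊢
  exact card_support_eq_two_and_iSup_sub_iInf_eq _ hrank htrace

end IsHermitian

end Matrix

/-- For `m = 3q`, the symmetric `m × m` matrix `B` with a `q × q` zero top-left block and
all other entries `1` has rank `2` and spread `2√3 · q`. -/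
theorem block_matrix_rank_and_spread (q : ℕ) (hq : 1 ≤ q)
    (B : Matrix (Fin (3 * q)) (Fin (3 * q)) ℝ)
    (hB : B = Matrix.of fun i j : Fin (3 * q) => if (i : ℕ) < q ∧ (j : ℕ) < q then (0:ℝ) else 1)
    (hBh : B.IsHermitian) :
    B.rank = 2 ∧
      (⨆ i, hBh.eigenvalues i) - (⨅ i, hBh.eigenvalues i) = 2 * Real.sqrt 3 * q := by
  set e : Fin (3 * q) → ℝ := fun i => if (i : ℕ) < q then 1 else 0
  have hBe : B = vecMulVec 1 1 - vecMulVec e e := by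
    ext i j
    by_cases hi : (i : ℕ) < q <;> by_cases hj : (j : ℕ) < q <;>
      simp [hB, vecMulVec_apply, e, hi, hj]
  have hcard : #{i : Fin (3 * q) | (i : ℕ) < q} = q := by
    rw [Fin.card_filter_val_lt]; omega
  have hone_e : 1 ⬝ᵥ e = q := by rw [one_dotProduct, sum_boole, hcard]
  have he_e : e ⬝ᵥ e = q := by rw [boole_dotProduct_boole, hcard]
  have hone_one : (1 : Fin (3 * q) → ℝ) ⬝ᵥ 1 = 3 * q := by simp
  have htrace : B.trace = 2 * q := by
    rw [hBe, trace_sub, trace_vecMulVec, trace_vecMulVec, hone_one, he_e]; ring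
  have htrace_sq : (B * B).trace = 8 * q ^ 2 := by
    rw [hBe, trace_mul_self_vecMulVec_sub_vecMulVec, hone_one, hone_e, he_e]; ring
  have hq_pos : (0 : ℝ) < q := by exact_mod_cast hq
  obtain ⟨hrank, hspread⟩ := hBh.rank_eq_two_and_iSup_sub_iInf_eigenvalues
    (hBe ▸ rank_vecMulVec_sub_vecMulVec_le _ _ _ _) (by rw [htrace, htrace_sq]; nlinarith)
  refine ⟨hrank, ?_⟩
  have hspread_sq : 2 * (8 * (q : ℝ) ^ 2) - (2 * q) ^ 2 = (2 * √3 * q) ^ 2 := by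
    linear_combination (-4 * (q : ℝ) ^ 2) * Real.sq_sqrt (show (0 : ℝ) ≤ 3 by norm_num)
  rw [hspread, htrace, htrace_sq, hspread_sq, Real.sqrt_sq (by positivity)]
end

section
/- Let −1 ≤ a < 1, m ≥ 2, 1 ≤ k < m, and let A be the m×m symmetric matrix with A_{ij} = a when both i,j ≤ k and A_{ij} = 1 otherwise. Then spread(A) = sqrt((a² + 2a − 3)k² + 2m(1 − a)k + m²). -/
/-!
Writing `u` for the indicator vector of the first `k` coordinates, `A = 𝟙𝟙ᵀ + (a - 1) u uᵀ`
factors as `P Q` with `P : m × 2` and `Q : 2 × m`. Hence `χ_A = X ^ (m - 2) χ_{QP}`, so the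
nonzero eigenvalues of `A` are the two roots of the quadratic `χ_{QP}`. Since
`det (QP) = (a - 1) k (m - k) < 0`, these roots have opposite signs, so they are the largest
and smallest eigenvalues, and their difference is `√(tr (QP)² - 4 det (QP))`.
-/

open Polynomial

namespace Matrix

section RankTwo

variable {n R : Type*} [CommRing R]

theorem of_two_mul_transpose_of_two [Fintype n] (x y z w : n → R) :
    of ![z, w] * (of ![x, y])ᵀ = !![z ⬝ᵥ x, z ⬝ᵥ y; w ⬝ᵥ x, w ⬝ᵥ y] := by
  ext i j
  fin_cases i <;> fin_cases j <;> rfl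

theorem of_ite_and_eq_transpose_mul (p : n → Prop) [DecidablePred p] (a : R) :
    (of fun i j => if p i ∧ p j then a else 1) =
      (of ![1, fun i => if p i then (1 : R) else 0])ᵀ *
        of ![1, (a - 1) • fun i => if p i then (1 : R) else 0] := by
  ext i j
  by_cases hi : p i <;> by_cases hj : p j <;> simp [mul_apply, hi, hj]

theorem charpoly_mul_of_fin_two [Fintype n] [DecidableEq n] [Nontrivial R]
    (P : Matrix n (Fin 2) R) (Q : Matrix (Fin 2) n R) (hn : 2 ≤ Fintype.card n) :
    (P * Q).charpoly =
      X ^ (Fintype.card n - 2) * (X ^ 2 - C (Q * P).trace * X + C (Q * P).det) := by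
  rw [charpoly_mul_comm_of_le P Q (by simpa using hn), charpoly_fin_two, Fintype.card_fin]

end RankTwo

namespace IsHermitian

variable {n : Type*} [Fintype n] [DecidableEq n] {A : Matrix n n ℝ}

theorem mem_range_eigenvalues_iff_isRoot_charpoly (hA : A.IsHermitian) (x : ℝ) :
    x ∈ Set.range hA.eigenvalues ↔ A.charpoly.IsRoot x := by
  rw [← hA.spectrum_real_eq_range_eigenvalues, mem_spectrum_iff_isRoot_charpoly]

theorem iSup_sub_iInf_eigenvalues_of_eq_mul (hA : A.IsHermitian)
    {P : Matrix n (Fin 2) ℝ} {Q : Matrix (Fin 2) n ℝ} (hPQ : A = P * Q)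
    (hn : 2 ≤ Fintype.card n) (hdet : (Q * P).det < 0) :
    (⨆ i, hA.eigenvalues i) - (⨅ i, hA.eigenvalues i) =
      √((Q * P).trace ^ 2 - 4 * (Q * P).det) := by
  set t := (Q * P).trace
  set d := (Q * P).det
  set s := √(t ^ 2 - 4 * d)
  have hs : s ^ 2 = t ^ 2 - 4 * d := Real.sq_sqrt (by nlinarith)
  have hs₀ : 0 ≤ s := Real.sqrt_nonneg _
  have hfactor (x : ℝ) : x ^ 2 - t * x + d = (x - (t + s) / 2) * (x - (t - s) / 2) := by
    linear_combination (1 / 4) * hs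
  have hneg : (t - s) / 2 < 0 := by nlinarith [hfactor 0]
  have hpos : 0 < (t + s) / 2 := by nlinarith [hfactor 0]
  have hrange (x : ℝ) : x ∈ Set.range hA.eigenvalues ↔
      x ^ (Fintype.card n - 2) * ((x - (t + s) / 2) * (x - (t - s) / 2)) = 0 := by
    rw [hA.mem_range_eigenvalues_iff_isRoot_charpoly, hPQ, charpoly_mul_of_fin_two P Q hn,
      IsRoot.def, ← hfactor]
    simp only [eval_mul, eval_pow, eval_X, eval_sub, eval_add, eval_C, t, d]
  have hbounds {x : ℝ} (hx : x ∈ Set.range hA.eigenvalues) :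
      (t - s) / 2 ≤ x ∧ x ≤ (t + s) / 2 := by
    have hx' := (hrange x).mp hx
    simp only [mul_eq_zero, sub_eq_zero, pow_eq_zero_iff'] at hx'
    rcases hx' with ⟨rfl, -⟩ | rfl | rfl <;> constructor <;> linarith
  have hsup : IsGreatest (Set.range hA.eigenvalues) ((t + s) / 2) :=
    ⟨(hrange _).mpr (by ring), fun _ hx ↦ (hbounds hx).2⟩
  have hinf : IsLeast (Set.range hA.eigenvalues) ((t - s) / 2) :=
    ⟨(hrange _).mpr (by ring), fun _ hx ↦ (hbounds hx).1⟩
  rw [iSup, iInf, hsup.csSup_eq, hinf.csInf_eq]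
  ring

end IsHermitian

end Matrix

open Matrix

theorem spread_rank_two_block_general (m k : ℕ) (hk : 1 ≤ k) (hkm : k < m)
    (a : ℝ) (ha' : a < 1)
    (A : Matrix (Fin m) (Fin m) ℝ)
    (hA : A = Matrix.of fun i j : Fin m =>
      if (i : ℕ) < k ∧ (j : ℕ) < k then a else 1)
    (hAh : A.IsHermitian) :
    (⨆ i, hAh.eigenvalues i) - (⨅ i, hAh.eigenvalues i) =
      Real.sqrt ((a ^ 2 + 2 * a - 3) * k ^ 2 + 2 * m * (1 - a) * k + m ^ 2) := by
  set u : Fin m → ℝ := fun i => if (i : ℕ) < k then 1 else 0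
  have hPQ : A = (of ![1, u])ᵀ * of ![1, (a - 1) • u] :=
    hA.trans (of_ite_and_eq_transpose_mul _ a)
  have hQP : of ![1, (a - 1) • u] * (of ![1, u])ᵀ = !![(m : ℝ), k; k * a - k, k * a - k] := by
    rw [of_two_mul_transpose_of_two]
    simp [u, dotProduct, Finset.sum_ite, Fin.card_filter_val_lt, hkm.le, ← ite_and]
  have hdet : (of ![1, (a - 1) • u] * (of ![1, u])ᵀ).det < 0 := by
    have hk₀ : (0 : ℝ) < k := by exact_mod_cast hk
    have hkm₀ : (0 : ℝ) < m - k := sub_pos.mpr (by exact_mod_cast hkm)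
    rw [hQP, det_fin_two_of]
    nlinarith [mul_pos hk₀ hkm₀]
  rw [hAh.iSup_sub_iInf_eigenvalues_of_eq_mul hPQ (by rw [Fintype.card_fin]; omega) hdet, hQP,
    trace_fin_two_of, det_fin_two_of]
  congr 1
  ring

/-- For `-1 ≤ a < 1`, `1 ≤ k < m`, the symmetric matrix with an `a`-valued `k × k`
top-left block and ones elsewhere has spread `√((a²+2a−3)k² + 2m(1−a)k + m²)`. -/
theorem spread_rank_two_block (m k : ℕ) (hm : 2 ≤ m) (hk : 1 ≤ k) (hkm : k < m)
    (a : ℝ) (ha : -1 ≤ a) (ha' : a < 1)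
    (A : Matrix (Fin m) (Fin m) ℝ)
    (hA : A = Matrix.of fun i j : Fin m =>
      if (i : ℕ) < k ∧ (j : ℕ) < k then a else 1)
    (hAh : A.IsHermitian) :
    (⨆ i, hAh.eigenvalues i) - (⨅ i, hAh.eigenvalues i) =
      Real.sqrt ((a ^ 2 + 2 * a - 3) * k ^ 2 + 2 * m * (1 - a) * k + m ^ 2) :=
  spread_rank_two_block_general m k hk hkm a ha' A hA hAh
end

section
/- For −1 ≤ a < 1, the m×m matrix A = [[a·J_k, J_{k,m−k}],[J_{m−k,k}, J_{m−k}]] with k = round(m/(a+3)) attains the Mirsky bound sqrt(2‖A‖_F² − (2/m)Tr(A)²) with equality if and only if a = −1 and m is even. -/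
/-!
Write `A = 𝟙𝟙ᵀ + (a - 1) χχᵀ`, with `χ` the indicator of the first `k` coordinates. Then `A`
satisfies `A³ = t A² - d A` with `t = tr A = a k + (m - k)` and
`d = k (m - k) (a - 1) < 0`, so its eigenvalues are `0` and the roots `λ₊ > 0 > λ₋` of
`x² - t x + d`; the identities `tr A = t` and `tr A² = t² - 2d` force both roots to occur.
Hence `spread(A)² = t² - 4d`, whereas the square of Mirsky's bound is `t² - 4d + (1 - 2/m) t²`.
Equality therefore means `t = 0`, i.e. `m = (1 - a) k`, and for `k = round (m / (a + 3))` this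
forces `m = 2k` and `a = -1`.
-/

open Matrix Finset Polynomial

theorem iSup_eq_and_iInf_eq_of_sum_eq {ι : Type*} [Fintype ι] {E : ι → ℝ} {p q : ℝ}
    (hq : q < 0) (hp : 0 < p) (hE : ∀ i, E i = 0 ∨ E i = p ∨ E i = q)
    (h1 : ∑ i, E i = p + q) (h2 : ∑ i, E i ^ 2 = p ^ 2 + q ^ 2) :
    ⨆ i, E i = p ∧ ⨅ i, E i = q := by
  -- `∑ E (E - q) = p (p - q) > 0` and `∑ E (E - p) = q (q - p) > 0`
  have hp_mem : ∃ i, E i = p := by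
    obtain ⟨i, -, hi⟩ : ∃ i ∈ univ, 0 < E i * (E i - q) := by
      refine exists_lt_of_sum_lt ?_
      simp only [sum_const_zero, mul_sub, sum_sub_distrib, ← sum_mul, ← sq, h1, h2]
      nlinarith
    rcases hE i with h | h | h
    · simp [h] at hi
    · exact ⟨i, h⟩
    · simp [h] at hi
  have hq_mem : ∃ i, E i = q := by
    obtain ⟨i, -, hi⟩ : ∃ i ∈ univ, 0 < E i * (E i - p) := by
      refine exists_lt_of_sum_lt ?_
      simp only [sum_const_zero, mul_sub, sum_sub_distrib, ← sum_mul, ← sq, h1, h2]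
      nlinarith
    rcases hE i with h | h | h
    · simp [h] at hi
    · simp [h] at hi
    · exact ⟨i, h⟩
  have hle : ∀ i, q ≤ E i ∧ E i ≤ p := fun i => by
    rcases hE i with h | h | h <;> rw [h] <;> constructor <;> linarith
  obtain ⟨i, hi⟩ := hp_mem
  obtain ⟨j, hj⟩ := hq_mem
  have : Nonempty ι := ⟨i⟩
  exact ⟨le_antisymm (ciSup_le fun i => (hle i).2) (hi ▸ le_ciSup (Finite.bddAbove_range E) i),
    le_antisymm (hj ▸ ciInf_le (Finite.bddBelow_range E) j) (le_ciInf fun i => (hle i).1)⟩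

theorem Matrix.IsSymm.trace_mul_self {n R : Type*} [Fintype n] [CommSemiring R]
    {A : Matrix n n R} (hA : A.IsSymm) : (A * A).trace = ∑ i, ∑ j, A i j ^ 2 := by
  simp only [trace, diag_apply, mul_apply, sq]
  refine sum_congr rfl fun i _ => sum_congr rfl fun j _ => ?_
  rw [hA.apply i j]

namespace Matrix.IsHermitian

variable {𝕜 n : Type*} [RCLike 𝕜] [Fintype n] [DecidableEq n] {A : Matrix n n 𝕜}

theorem eval_eigenvalues_eq_zero (hA : A.IsHermitian) {p : ℝ[X]} (hp : aeval A p = 0) (i : n) :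
    p.eval (hA.eigenvalues i) = 0 := by
  have : Nonempty n := ⟨i⟩
  simpa [hp, spectrum.zero_eq] using
    spectrum.subset_polynomial_aeval A p ⟨_, hA.eigenvalues_mem_spectrum_real i, rfl⟩

theorem trace_mul_self_eq_sum_sq_eigenvalues (hA : A.IsHermitian) :
    (A * A).trace = ∑ i, (hA.eigenvalues i : 𝕜) ^ 2 := by
  conv_lhs => rw [hA.spectral_theorem, ← map_mul]
  rw [Unitary.conjStarAlgAut_apply, trace_mul_cycle, Unitary.coe_star_mul_self, one_mul,
    diagonal_mul_diagonal, trace_diagonal]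
  simp [sq]

theorem iSup_sub_iInf_eigenvalues_eq_sqrt (hA : A.IsHermitian) {t d : ℝ} (hd : d < 0)
    (hcub : A ^ 3 = t • A ^ 2 - d • A) (htr : A.trace = t)
    (htr2 : (A * A).trace = t ^ 2 - 2 * d) :
    (⨆ i, hA.eigenvalues i) - (⨅ i, hA.eigenvalues i) = √(t ^ 2 - 4 * d) := by
  set s := √(t ^ 2 - 4 * d)
  have hs : s ^ 2 = t ^ 2 - 4 * d := Real.sq_sqrt (by nlinarith)
  have hts : |t| < s := abs_lt_of_sq_lt_sq (by linarith) (Real.sqrt_nonneg _)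
  set p := (t + s) / 2 with hp
  set q := (t - s) / 2 with hq
  have hroots : ∀ i, hA.eigenvalues i = 0 ∨ hA.eigenvalues i = p ∨ hA.eigenvalues i = q := by
    intro i
    have hev := hA.eval_eigenvalues_eq_zero (p := X ^ 3 - C t * X ^ 2 + C d * X)
      (by simp [hcub, Algebra.smul_def]) i
    simp only [eval_add, eval_sub, eval_mul, eval_pow, eval_C, eval_X] at hev
    have : hA.eigenvalues i * ((hA.eigenvalues i - p) * (hA.eigenvalues i - q)) = 0 := by
      linear_combination hev - hA.eigenvalues i / 4 * hs
    simp only [mul_eq_zero, sub_eq_zero] at this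
    tauto
  have hsum : ∑ i, hA.eigenvalues i = p + q := by
    have := hA.trace_eq_sum_eigenvalues
    rw [htr] at this
    rw [show p + q = t by ring]
    exact_mod_cast this.symm
  have hsum_sq : ∑ i, hA.eigenvalues i ^ 2 = p ^ 2 + q ^ 2 := by
    have := hA.trace_mul_self_eq_sum_sq_eigenvalues
    rw [htr2] at this
    rw [show p ^ 2 + q ^ 2 = t ^ 2 - 2 * d by linear_combination hs / 2]
    exact_mod_cast this.symm
  obtain ⟨hsup, hinf⟩ := iSup_eq_and_iInf_eq_of_sum_eq
    (by linarith [abs_lt.mp hts]) (by linarith [abs_lt.mp hts]) hroots hsum hsum_sq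
  rw [hsup, hinf]
  ring

end Matrix.IsHermitian

section CornerMatrix

variable {ι R : Type*} [Fintype ι] [DecidableEq ι] [CommRing R] (S : Finset ι) (a : R)

theorem sum_ite_mem_const (x y : R) :
    ∑ l, (if l ∈ S then x else y) = #S * x + (Fintype.card ι - #S) * y := by
  rw [sum_ite, filter_mem_eq_inter, univ_inter, sum_const, sum_const, filter_not,
    filter_mem_eq_inter, univ_inter, card_sdiff_of_subset (subset_univ S), card_univ,
    nsmul_eq_mul, nsmul_eq_mul, Nat.cast_sub (card_le_univ S)]

def cornerMatrix : Matrix ι ι R := of fun i j => if i ∈ S ∧ j ∈ S then a else 1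

omit [Fintype ι] in
theorem cornerMatrix_apply (i j : ι) :
    cornerMatrix S a i j = if i ∈ S then (if j ∈ S then a else 1) else 1 := by
  simp [cornerMatrix, ite_and]

theorem cornerMatrix_mul_self_apply (i j : ι) :
    (cornerMatrix S a * cornerMatrix S a) i j =
      #S * ((if i ∈ S then a else 1) * (if j ∈ S then a else 1)) + (Fintype.card ι - #S) := by
  rw [mul_apply, ← mul_one (Fintype.card ι - #S : R), ← sum_ite_mem_const]
  refine sum_congr rfl fun l _ => ?_
  by_cases hl : l ∈ S <;> simp [cornerMatrix_apply, hl]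

theorem cornerMatrix_pow_three :
    cornerMatrix S a ^ 3 =
      (a * #S + (Fintype.card ι - #S)) • cornerMatrix S a ^ 2 -
        (#S * (Fintype.card ι - #S) * (a - 1)) • cornerMatrix S a := by
  ext i j
  set w : ι → R := fun i => if i ∈ S then a else 1
  have hrow : ∀ l, cornerMatrix S a i l * (cornerMatrix S a * cornerMatrix S a) l j =
      if l ∈ S then w i * (#S * (a * w j) + (Fintype.card ι - #S))
      else #S * w j + (Fintype.card ι - #S) := fun l => by
    by_cases hl : l ∈ S <;> simp [w, cornerMatrix_apply, cornerMatrix_mul_self_apply, hl]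
  rw [pow_succ', sq, mul_apply, Matrix.sub_apply, Matrix.smul_apply, Matrix.smul_apply]
  simp only [hrow, sum_ite_mem_const]
  simp only [cornerMatrix_mul_self_apply, cornerMatrix_apply, smul_eq_mul]
  by_cases hi : i ∈ S <;> by_cases hj : j ∈ S <;> simp only [w, hi, hj, if_true, if_false] <;> ring

theorem trace_cornerMatrix :
    (cornerMatrix S a).trace = a * #S + (Fintype.card ι - #S) := by
  rw [trace, ← mul_one (Fintype.card ι - #S : R), mul_comm a, ← sum_ite_mem_const]
  refine sum_congr rfl fun l _ => ?_
  by_cases hl : l ∈ S <;> simp [cornerMatrix_apply, hl]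

theorem trace_cornerMatrix_mul_self :
    (cornerMatrix S a * cornerMatrix S a).trace =
      (a * #S + (Fintype.card ι - #S)) ^ 2 - 2 * (#S * (Fintype.card ι - #S) * (a - 1)) := by
  simp only [trace, diag_apply, cornerMatrix_mul_self_apply, apply_ite₂ HMul.hMul, mul_ite,
    ite_add, sum_ite_mem_const]
  ring

end CornerMatrix

theorem sqrt_discrim_eq_sqrt_iff {t d M : ℝ} (hd : d ≤ 0) (hM : 2 < M) :
    √(t ^ 2 - 4 * d) = √(2 * (t ^ 2 - 2 * d) - 2 / M * t ^ 2) ↔ t = 0 := by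
  have hM' : 0 < (M - 2) / M := div_pos (by linarith) (by linarith)
  have harg : 2 * (t ^ 2 - 2 * d) - 2 / M * t ^ 2 = (t ^ 2 - 4 * d) + (M - 2) / M * t ^ 2 := by
    field_simp
    ring
  rw [harg, Real.sqrt_inj (by nlinarith) (by nlinarith), left_eq_add,
    mul_eq_zero, or_iff_right hM'.ne', pow_eq_zero_iff two_ne_zero]

section RoundDiv

variable {m k : ℕ} {a : ℝ}

theorem abs_div_sub_le_of_eq_round (hk : (k : ℤ) = round ((m : ℝ) / (a + 3))) :
    |(m : ℝ) / (a + 3) - k| ≤ 1 / 2 := by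
  have := abs_sub_round ((m : ℝ) / (a + 3))
  rwa [← hk, Int.cast_natCast] at this

theorem pos_and_lt_of_eq_round_div (hm : 2 ≤ m) (ha : -1 ≤ a) (ha' : a < 1)
    (hk : (k : ℤ) = round ((m : ℝ) / (a + 3))) : 0 < k ∧ k < m := by
  have hround := abs_le.mp (abs_div_sub_le_of_eq_round hk)
  have hm' : (2 : ℝ) ≤ m := by exact_mod_cast hm
  have hlow : (m : ℝ) / 4 < m / (a + 3) :=
    div_lt_div_of_pos_left (by linarith) (by linarith) (by linarith)
  have hup : (m : ℝ) / (a + 3) ≤ m / 2 :=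
    div_le_div_of_nonneg_left (by linarith) (by norm_num) (by linarith)
  constructor
  · exact_mod_cast (by linarith : (0 : ℝ) < k)
  · exact_mod_cast (by linarith : (k : ℝ) < m)

theorem mul_add_sub_eq_zero_iff_of_eq_round (hm : 0 < m) (ha : -1 ≤ a)
    (hk : (k : ℤ) = round ((m : ℝ) / (a + 3))) :
    a * k + (m - k) = 0 ↔ a = -1 ∧ Even m := by
  constructor
  · intro h
    have hm' : (0 : ℝ) < m := by exact_mod_cast hm
    have hk0 : (0 : ℝ) < k := by
      rcases (Nat.cast_nonneg k : (0 : ℝ) ≤ k).eq_or_lt with h0 | h0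
      · rw [← h0] at h; linarith
      · exact h0
    have ha' : a < 1 := by nlinarith
    have h2k : m = 2 * k := by
      have hle : m ≤ 2 * k := by exact_mod_cast (by nlinarith : (m : ℝ) ≤ 2 * k)
      by_contra hne
      have hlt : (m : ℝ) + 1 ≤ 2 * k := by exact_mod_cast (by omega : m + 1 ≤ 2 * k)
      -- `k - m / (a + 3) = 2 (2k - m) / (a + 3) ≥ 2 / (a + 3) > 1 / 2`
      have : (1 : ℝ) / 2 < k - m / (a + 3) := by
        rw [lt_sub_iff_add_lt, ← lt_sub_iff_add_lt', div_lt_iff₀ (by linarith)]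
        nlinarith
      linarith [(abs_le.mp (abs_div_sub_le_of_eq_round hk)).1]
    refine ⟨?_, ⟨k, by omega⟩⟩
    rw [h2k, Nat.cast_mul, Nat.cast_two] at h
    nlinarith
  · rintro ⟨rfl, n, rfl⟩
    have hkn : k = n := by
      rw [show ((n + n : ℕ) : ℝ) / (-1 + 3) = (n : ℤ) by push_cast; ring, round_intCast] at hk
      exact_mod_cast hk
    subst hkn
    push_cast
    ring

end RoundDiv

/-- For `-1 ≤ a < 1` and the rank-two block matrix `A` with block size
`k = round (m/(a+3))`, `A` attains the Mirsky bound
`√(2‖A‖_F² − (2/m) Tr(A)²)` if and only if `a = -1` and `m` is even. -/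
theorem mirsky_matrix_iff (m : ℕ) (hm : 3 ≤ m) (a : ℝ) (ha : -1 ≤ a) (ha' : a < 1)
    (k : ℕ) (hk : (k : ℤ) = round ((m : ℝ) / (a + 3)))
    (A : Matrix (Fin m) (Fin m) ℝ)
    (hA : A = Matrix.of fun i j : Fin m =>
      if (i : ℕ) < k ∧ (j : ℕ) < k then a else 1)
    (hAh : A.IsHermitian) :
    (⨆ i, hAh.eigenvalues i) - (⨅ i, hAh.eigenvalues i) =
        Real.sqrt (2 * ∑ i, ∑ j, (A i j) ^ 2 - (2 / m) * (Matrix.trace A) ^ 2) ↔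
      a = -1 ∧ Even m := by
  obtain ⟨hk0, hkm⟩ := pos_and_lt_of_eq_round_div (by omega) ha ha' hk
  set S : Finset (Fin m) := {i | (i : ℕ) < k}
  have hS : (#S : ℝ) = k := by simp [S, Fin.card_filter_val_lt, hkm.le]
  have hAS : A = cornerMatrix S a := by ext i j; simp [hA, cornerMatrix, S]
  have hd : (k : ℝ) * (m - k) * (a - 1) < 0 :=
    mul_neg_of_pos_of_neg (mul_pos (by exact_mod_cast hk0) (by simp [hkm])) (by linarith)
  have hcub := cornerMatrix_pow_three S a
  have htr := trace_cornerMatrix S a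
  have htr2 := trace_cornerMatrix_mul_self S a
  rw [hS, Fintype.card_fin, ← hAS] at hcub htr htr2
  have hsymm : A.IsSymm := (conjTranspose_eq_transpose_of_trivial A).symm.trans hAh
  rw [hAh.iSup_sub_iInf_eigenvalues_eq_sqrt hd hcub htr htr2, ← hsymm.trace_mul_self, htr2, htr,
    sqrt_discrim_eq_sqrt_iff hd.le (by exact_mod_cast hm),
    mul_add_sub_eq_zero_iff_of_eq_round (by omega) ha hk]
end
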